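/- arXiv:2312.15931 — 4 statements merged into one kernel-verified Lean document; each statement's English description precedes it below -/
import Mathlib

section
/- Let B = (B_t)_{t ≥ 0} be a standard one-dimensional Brownian motion and let ε > 0. Define the random variable M_B := sup over all 0 < s < t < ∞ of |B_t − B_s| / √(h (1 + ln(t/h) + ε|ln t|)), where h = t − s. Then M_B² admits exponential moments, i.e. there exists λ > 0 such that E[exp(λ M_B²)] < ∞. -/
open MeasureTheory ProbabilityTheory

/-- `B` is a standard one-dimensional Brownian motion on `(Ω, P)`: measurable in `ω`,
starts at `0`, has continuous paths, Gaussian increments `B t - B s ~ N(0, t - s)`,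
and independent increments. -/
def IsBrownianMotion {Ω : Type*} [MeasurableSpace Ω] (P : Measure Ω) (B : ℝ → Ω → ℝ) : Prop :=
  (∀ t : ℝ, Measurable (B t)) ∧
  (∀ ω, B 0 ω = 0) ∧
  (∀ ω, Continuous fun t => B t ω) ∧
  (∀ s t : ℝ, 0 ≤ s → s ≤ t →
    P.map (fun ω => B t ω - B s ω) = gaussianReal 0 (Real.toNNReal (t - s))) ∧
  (∀ (n : ℕ) (u : Fin (n + 1) → ℝ), Monotone u → 0 ≤ u 0 →
    iIndepFun
      (fun i : Fin n => fun ω => B (u i.succ) ω - B (u i.castSucc) ω) P)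

open Real Filter Topology Finset
open scoped ENNReal NNReal

/-!
Chaining over the dyadic intervals `[k 2⁻ⁿ, (k + 1) 2⁻ⁿ]`, `n ∈ ℤ`, `k ∈ ℕ`, with the weights
`c(n, k) = 1 + |n| + log (2 + k)`. The increment `Δ` of `B` over such an interval is
`N(0, 2⁻ⁿ)`, so `E (exp (Δ² / (4 · 2⁻ⁿ c)) - e⁴)⁺ ≤ 2 e^{-2c}`, and these bounds are summable
over `(n, k)`. Hence `Y := sup_{n,k} exp (Δ² / (4 · 2⁻ⁿ c))` is integrable, and
`|Δ| ≤ 2 √(log Y) √(2⁻ⁿ c)` on every dyadic interval.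

For a continuous path with such dyadic bounds, approximate `t` from below by `⌊2ᵐ t⌋ / 2ᵐ` and
`s` from above by `⌈2ᵐ s⌉ / 2ᵐ`, starting at the level `2⁻ᵐ ≈ t - s`: each refinement moves
each endpoint by at most one dyadic interval, whose weight at depth `j` below the starting level
is `O(j · (1 + log (t / (t - s)) + |log t|))`, while the lengths decay geometrically in `j`.
This gives `M_B ≤ C_ε √(log Y)`, so `exp (λ M_B²) ≤ Y` for `λ = 1 / C_ε²`.
-/

namespace Nat

variable {α : Type*} [Field α] [LinearOrder α] [IsStrictOrderedRing α] [FloorSemiring α] {x : α}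

lemma floor_two_mul_eq_or (hx : 0 ≤ x) :
    ⌊2 * x⌋₊ = 2 * ⌊x⌋₊ ∨ ⌊2 * x⌋₊ = 2 * ⌊x⌋₊ + 1 := by
  have hle : 2 * ⌊x⌋₊ ≤ ⌊2 * x⌋₊ := Nat.le_floor (by push_cast; linarith [Nat.floor_le hx])
  have hlt : ⌊2 * x⌋₊ < 2 * ⌊x⌋₊ + 2 := by
    exact_mod_cast (Nat.floor_le (by positivity)).trans_lt
      (by linarith [Nat.lt_floor_add_one x] : 2 * x < 2 * (⌊x⌋₊ : α) + 2)
  omega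

lemma ceil_two_mul_eq_or (hx : 0 ≤ x) :
    2 * ⌈x⌉₊ = ⌈2 * x⌉₊ ∨ 2 * ⌈x⌉₊ = ⌈2 * x⌉₊ + 1 := by
  have hle : ⌈2 * x⌉₊ ≤ 2 * ⌈x⌉₊ := Nat.ceil_le.2 (by push_cast; linarith [Nat.le_ceil x])
  have hlt : 2 * ⌈x⌉₊ < ⌈2 * x⌉₊ + 2 := by
    exact_mod_cast (by linarith [Nat.ceil_lt_add_one hx, Nat.le_ceil (2 * x)] :
      2 * (⌈x⌉₊ : α) < ⌈2 * x⌉₊ + 2)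
  omega

lemma floor_add_eq_ceil_or {d : α} (hx : 0 ≤ x) (hd₁ : 1 ≤ d) (hd₂ : d < 2) :
    ⌊x + d⌋₊ = ⌈x⌉₊ ∨ ⌊x + d⌋₊ = ⌈x⌉₊ + 1 := by
  have hle : ⌈x⌉₊ ≤ ⌊x + d⌋₊ := Nat.le_floor (by linarith [Nat.ceil_lt_add_one hx])
  have hlt : ⌊x + d⌋₊ < ⌈x⌉₊ + 2 := by
    exact_mod_cast (Nat.floor_le (by linarith)).trans_lt
      (by linarith [Nat.le_ceil x] : x + d < (⌈x⌉₊ : α) + 2)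
  omega

end Nat

lemma add_two_div_two_pow_succ_le (m : ℕ) : ((m : ℝ) + 2) / 2 ^ (m + 1) ≤ (81 / 100) ^ m := by
  induction m with
  | zero => norm_num
  | succ m ih =>
    rw [pow_succ (81 / 100 : ℝ), pow_succ (2 : ℝ), div_mul_eq_div_div]
    push_cast
    have hm : (0 : ℝ) ≤ m := m.cast_nonneg
    calc ((m : ℝ) + 1 + 2) / 2 ^ (m + 1) / 2
        ≤ (81 / 100) * (((m : ℝ) + 2) / 2 ^ (m + 1)) := by
          rw [div_div, div_le_iff₀ (by positivity)]
          field_simp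
          nlinarith
      _ ≤ _ := by nlinarith

lemma sqrt_add_two_div_two_pow_succ_le (m : ℕ) :
    √(((m : ℝ) + 2) / 2 ^ (m + 1)) ≤ (9 / 10) ^ m := by
  have hsq : (81 / 100 : ℝ) ^ m = ((9 / 10) ^ m) ^ 2 := by
    rw [← pow_mul, mul_comm, pow_mul]; norm_num
  calc √(((m : ℝ) + 2) / 2 ^ (m + 1)) ≤ √(((9 / 10) ^ m) ^ 2) :=
        hsq ▸ Real.sqrt_le_sqrt (add_two_div_two_pow_succ_le m)
    _ = (9 / 10) ^ m := Real.sqrt_sq (by positivity)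

lemma abs_le_of_one_le_two_zpow_mul {n : ℤ} {h : ℝ} (h₁ : 1 ≤ 2 ^ n * h) (h₂ : 2 ^ n * h < 2) :
    |(n : ℝ)| ≤ 3 / 2 * |log h| + 1 := by
  have hh : 0 < h := pos_of_mul_pos_right (one_pos.trans_le h₁) (by positivity)
  have hlog : log (2 ^ n * h) = n * log 2 + log h := by
    rw [log_mul (by positivity) hh.ne', log_zpow]
  have hlo : 0 ≤ n * log 2 + log h := hlog ▸ log_nonneg h₁
  have hhi : n * log 2 + log h < log 2 := hlog ▸ log_lt_log (by positivity) h₂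
  have hlog2 : 2 / 3 ≤ log 2 := by linarith [log_two_gt_d9]
  have hn : |(n : ℝ)| * log 2 ≤ |log h| + log 2 := by
    rw [← abs_of_pos (log_pos one_lt_two), ← abs_mul, abs_of_pos (log_pos one_lt_two)]
    exact abs_le.2 ⟨by linarith [le_abs_self (log h)], by linarith [neg_abs_le (log h)]⟩
  nlinarith [abs_nonneg (log h)]

lemma log_one_add_two_zpow_mul_le {n₀ : ℤ} {h t : ℝ} (hh : 0 < h) (hht : h ≤ t)
    (h₂ : 2 ^ n₀ * h < 2) (m : ℕ) :
    log (1 + 2 ^ (n₀ + m) * t) ≤ m + 2 + log (t / h) := by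
  have ht : 0 < t := hh.trans_le hht
  have hth : 1 ≤ t / h := (one_le_div hh).2 hht
  have h2m : (1 : ℝ) ≤ 2 ^ m := one_le_pow₀ one_le_two
  have h1 : 1 ≤ 2 ^ (m + 1) * (t / h) :=
    one_le_mul_of_one_le_of_one_le (one_le_pow₀ one_le_two) hth
  have hlt : 2 ^ (n₀ + m) * t ≤ 2 ^ (m + 1) * (t / h) := by
    rw [zpow_add₀ two_ne_zero, zpow_natCast, pow_succ, mul_div_assoc', le_div_iff₀ hh]
    have : 2 ^ n₀ * h * t ≤ 2 * t := by nlinarith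
    nlinarith
  calc log (1 + 2 ^ (n₀ + m) * t) ≤ log (2 ^ (m + 2) * (t / h)) := by
        refine log_le_log (by positivity) ?_
        rw [pow_succ]; linarith
    _ = (m + 2) * log 2 + log (t / h) := by
        rw [log_mul (by positivity) (by positivity), log_pow]; push_cast; ring
    _ ≤ m + 2 + log (t / h) := by
        have := log_two_lt_d9; nlinarith

lemma one_add_abs_add_log_one_add_two_zpow_mul_le {n₀ : ℤ} {h t : ℝ} (hht : h ≤ t)
    (h₁ : 1 ≤ 2 ^ n₀ * h) (h₂ : 2 ^ n₀ * h < 2) (m : ℕ) :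
    1 + |((n₀ + m : ℤ) : ℝ)| + log (1 + 2 ^ (n₀ + m) * t) ≤
      2 * (m + 2) * (1 + log (t / h) + |log t|) := by
  have hh : 0 < h := pos_of_mul_pos_right (one_pos.trans_le h₁) (by positivity)
  have hn₀ := abs_le_of_one_le_two_zpow_mul h₁ h₂
  have hlog := log_one_add_two_zpow_mul_le hh hht h₂ m
  have hth : 0 ≤ log (t / h) := log_nonneg ((one_le_div hh).2 hht)
  have hlogh : |log h| ≤ log (t / h) + |log t| := by
    rw [log_div (hh.trans_le hht).ne' hh.ne']
    have := log_le_log hh hht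
    rcases abs_cases (log h) with ⟨h1, h1'⟩ | ⟨h1, h1'⟩ <;>
      rcases abs_cases (log t) with ⟨h2, h2'⟩ | ⟨h2, h2'⟩ <;> linarith
  have hnm : |((n₀ + m : ℤ) : ℝ)| ≤ |(n₀ : ℝ)| + m := by
    simpa using abs_add_le (n₀ : ℝ) m
  have hm : (0 : ℝ) ≤ m := m.cast_nonneg
  nlinarith [abs_nonneg (log t), mul_nonneg hm (add_nonneg hth (abs_nonneg (log t)))]

lemma sqrt_div_two_zpow_le {n₀ : ℤ} {h c L : ℝ} (hL : 0 ≤ L) (h₁ : 1 ≤ 2 ^ n₀ * h) (m : ℕ)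
    (hc : c ≤ 2 * (m + 2) * L) :
    √(c / 2 ^ (n₀ + m)) ≤ 2 * √(h * L) * (9 / 10) ^ m := by
  have hh : 0 < h := pos_of_mul_pos_right (one_pos.trans_le h₁) (by positivity)
  calc √(c / 2 ^ (n₀ + m)) ≤ √(2 ^ 2 * (h * L) * ((m + 2) / 2 ^ (m + 1))) := by
        refine Real.sqrt_le_sqrt ?_
        rw [zpow_add₀ two_ne_zero, zpow_natCast, div_le_iff₀ (by positivity)]
        calc c ≤ 2 * (m + 2) * L := hc
          _ ≤ 2 * (m + 2) * L * (2 ^ n₀ * h) := le_mul_of_one_le_right (by positivity) h₁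
          _ = _ := by field_simp; ring
    _ = 2 * √(h * L) * √((m + 2) / 2 ^ (m + 1)) := by
        rw [Real.sqrt_mul (by positivity), Real.sqrt_mul (by positivity), Real.sqrt_sq two_pos.le]
    _ ≤ 2 * √(h * L) * (9 / 10) ^ m := by
        gcongr; exact sqrt_add_two_div_two_pow_succ_le m

noncomputable def dyadicWeight (n : ℤ) (k : ℕ) : ℝ := 1 + |(n : ℝ)| + log (2 + k)

lemma one_le_dyadicWeight (n : ℤ) (k : ℕ) : 1 ≤ dyadicWeight n k := by
  have : 0 ≤ log (2 + k) := log_nonneg (by linarith [k.cast_nonneg (α := ℝ)])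
  unfold dyadicWeight
  linarith [abs_nonneg (n : ℝ)]

section Chaining

variable {f : ℝ → ℝ}

lemma abs_sub_le_two_mul_of_tendsto {x y : ℕ → ℝ} {r : ℕ → ℝ} {s t S : ℝ} (hf : Continuous f)
    (hx : Tendsto x atTop (𝓝 t)) (hy : Tendsto y atTop (𝓝 s))
    (h₀ : |f (x 0) - f (y 0)| ≤ r 0) (hx_step : ∀ N, |f (x (N + 1)) - f (x N)| ≤ r (N + 1))
    (hy_step : ∀ N, |f (y N) - f (y (N + 1))| ≤ r (N + 1))
    (hS : ∀ N, ∑ m ∈ range N, r m ≤ S) :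
    |f t - f s| ≤ 2 * S := by
  have hr₀ : 0 ≤ r 0 := (abs_nonneg _).trans h₀
  have key : ∀ N, |f (x N) - f (y N)| ≤ 2 * ∑ m ∈ range (N + 1), r m - r 0 := by
    intro N
    induction N with
    | zero => simp only [zero_add, range_one, sum_singleton]; linarith
    | succ N ih =>
      rw [sum_range_succ]
      calc |f (x (N + 1)) - f (y (N + 1))|
          ≤ |f (x (N + 1)) - f (x N)| + |f (x N) - f (y N)| + |f (y N) - f (y (N + 1))| := by
            refine (abs_sub_le _ (f (y N)) _).trans (add_le_add ?_ le_rfl)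
            exact abs_sub_le _ _ _
        _ ≤ _ := by linarith [hx_step N, hy_step N]
  have hlim := (((hf.tendsto t).comp hx).sub ((hf.tendsto s).comp hy)).abs
  refine le_of_tendsto' hlim fun N => (key N).trans ?_
  linarith [hS (N + 1)]

variable {R : ℤ → ℝ} {t : ℝ}

lemma abs_sub_le_of_eq_or_eq_succ
    (hstep : ∀ (n : ℤ) (k : ℕ), ((k : ℝ) + 1) / 2 ^ n ≤ t →
      |f ((k + 1) / 2 ^ n) - f (k / 2 ^ n)| ≤ R n)
    {n : ℤ} (hR : 0 ≤ R n) {j k : ℕ} (hjk : j = k ∨ j = k + 1) (hj : (j : ℝ) / 2 ^ n ≤ t) :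
    |f (j / 2 ^ n) - f (k / 2 ^ n)| ≤ R n := by
  rcases hjk with rfl | rfl
  · simpa using hR
  · push_cast at hj ⊢
    exact hstep n k hj

lemma div_two_zpow_eq_two_mul_div_two_zpow_succ (k : ℕ) (n : ℤ) :
    (k : ℝ) / 2 ^ n = ((2 * k : ℕ) : ℝ) / 2 ^ (n + 1) := by
  rw [zpow_add_one₀ two_ne_zero]
  push_cast
  field_simp

lemma tendsto_two_zpow_add_atTop (n₀ : ℤ) :
    Tendsto (fun N : ℕ => (2 : ℝ) ^ (n₀ + N)) atTop atTop := by
  simp_rw [zpow_add₀ (two_ne_zero' ℝ), zpow_natCast]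
  exact (tendsto_pow_atTop_atTop_of_one_lt one_lt_two).const_mul_atTop (by positivity)

theorem abs_sub_le_of_dyadic_steps (hf : Continuous f)
    (hstep : ∀ (n : ℤ) (k : ℕ), ((k : ℝ) + 1) / 2 ^ n ≤ t →
      |f ((k + 1) / 2 ^ n) - f (k / 2 ^ n)| ≤ R n)
    (hR : ∀ n, 0 ≤ R n) {s : ℝ} (hs : 0 ≤ s) {n₀ : ℤ}
    (h₁ : 1 ≤ 2 ^ n₀ * (t - s)) (h₂ : 2 ^ n₀ * (t - s) < 2) {S : ℝ}
    (hS : ∀ N, ∑ m ∈ range N, R (n₀ + m) ≤ S) :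
    |f t - f s| ≤ 2 * S := by
  have ht : 0 ≤ t := by nlinarith [zpow_pos (two_pos (α := ℝ)) n₀]
  have hscale : ∀ (a : ℝ) (n : ℤ), 2 ^ (n + 1) * a = 2 * (2 ^ n * a) := fun a n => by
    rw [zpow_add_one₀ two_ne_zero]; ring
  set a : ℕ → ℕ := fun N => ⌊2 ^ (n₀ + N) * t⌋₊
  set b : ℕ → ℕ := fun N => ⌈2 ^ (n₀ + N) * s⌉₊
  have ha_le : ∀ N, (a N : ℝ) / 2 ^ (n₀ + N) ≤ t := fun N => by
    rw [div_le_iff₀' (by positivity)]; exact Nat.floor_le (by positivity)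
  have hb_le : ∀ N, (b N : ℝ) / 2 ^ (n₀ + N) ≤ t := fun N => by
    rw [div_le_iff₀' (by positivity)]
    have h2N : (2 : ℝ) ^ (n₀ + N) * (t - s) ≥ 1 := by
      rw [zpow_add₀ two_ne_zero, zpow_natCast, mul_comm _ ((2 : ℝ) ^ N), mul_assoc]
      nlinarith [one_le_pow₀ (M₀ := ℝ) (a := 2) (n := N) one_le_two]
    linarith [Nat.ceil_lt_add_one (show 0 ≤ (2 : ℝ) ^ (n₀ + N) * s by positivity)]
  refine abs_sub_le_two_mul_of_tendsto (r := fun m => R (n₀ + m))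
    (x := fun N => a N / 2 ^ (n₀ + N)) (y := fun N => b N / 2 ^ (n₀ + N)) hf ?_ ?_ ?_ ?_ ?_ hS
  · simpa [a, mul_comm, Function.comp_def] using
      (tendsto_nat_floor_mul_div_atTop ht).comp (tendsto_two_zpow_add_atTop n₀)
  · simpa [b, mul_comm, Function.comp_def] using
      (tendsto_nat_ceil_mul_div_atTop hs).comp (tendsto_two_zpow_add_atTop n₀)
  · refine abs_sub_le_of_eq_or_eq_succ hstep (hR _) ?_ (ha_le 0)
    have := Nat.floor_add_eq_ceil_or (x := 2 ^ n₀ * s) (by positivity) h₁ h₂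
    simpa [a, b, mul_sub] using this
  · intro N
    simp only [Nat.cast_succ, ← add_assoc]
    rw [div_two_zpow_eq_two_mul_div_two_zpow_succ (a N)]
    refine abs_sub_le_of_eq_or_eq_succ hstep (hR _) ?_ ?_
    · have := Nat.floor_two_mul_eq_or (x := 2 ^ (n₀ + N) * t) (by positivity)
      simpa [a, ← hscale, add_assoc] using this
    · simpa [add_assoc] using ha_le (N + 1)
  · intro N
    simp only [Nat.cast_succ, ← add_assoc]
    rw [div_two_zpow_eq_two_mul_div_two_zpow_succ (b N)]
    refine abs_sub_le_of_eq_or_eq_succ hstep (hR _) ?_ ?_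
    · have := Nat.ceil_two_mul_eq_or (x := 2 ^ (n₀ + N) * s) (by positivity)
      simpa [b, ← hscale, add_assoc, eq_comm] using this
    · rw [← div_two_zpow_eq_two_mul_div_two_zpow_succ]; exact hb_le N

theorem abs_sub_le_of_abs_dyadic_increment_le (hf : Continuous f) {X : ℝ} (hX : 0 ≤ X)
    (H : ∀ (n : ℤ) (k : ℕ),
      |f ((k + 1) / 2 ^ n) - f (k / 2 ^ n)| ≤ X * √(dyadicWeight n k / 2 ^ n))
    {s t : ℝ} (hs : 0 ≤ s) (hst : s < t) :
    |f t - f s| ≤ 40 * X * √((t - s) * (1 + log (t / (t - s)) + |log t|)) := by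
  set h := t - s
  have hh : 0 < h := sub_pos.2 hst
  have hht : h ≤ t := by linarith
  obtain ⟨n₁, hn₁, hn₁'⟩ := exists_mem_Ico_zpow hh one_lt_two
  have h₁ : 1 ≤ 2 ^ (-n₁) * h := by
    rwa [zpow_neg, ← div_eq_inv_mul, one_le_div (by positivity)]
  have h₂ : 2 ^ (-n₁) * h < 2 := by
    rw [zpow_neg, ← div_eq_inv_mul, div_lt_iff₀ (by positivity)]
    rwa [zpow_add_one₀ two_ne_zero, mul_comm] at hn₁'
  set L := 1 + log (t / h) + |log t|
  have hL : 0 ≤ L := by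
    have := log_nonneg ((one_le_div hh).2 hht); positivity
  set R : ℤ → ℝ := fun n => X * √((1 + |(n : ℝ)| + log (1 + 2 ^ n * t)) / 2 ^ n)
  have hstep : ∀ (n : ℤ) (k : ℕ), ((k : ℝ) + 1) / 2 ^ n ≤ t →
      |f ((k + 1) / 2 ^ n) - f (k / 2 ^ n)| ≤ R n := by
    intro n k hk
    rw [div_le_iff₀ (by positivity)] at hk
    refine (H n k).trans ?_
    simp only [R, dyadicWeight]
    gcongr X * √((1 + _ + log ?_) / _)
    linarith
  have hS : ∀ N, ∑ m ∈ range N, R (-n₁ + m) ≤ 20 * X * √(h * L) := by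
    intro N
    calc _ ≤ ∑ m ∈ range N, X * (2 * √(h * L) * (9 / 10) ^ m) :=
          sum_le_sum fun m _ => mul_le_mul_of_nonneg_left (sqrt_div_two_zpow_le hL h₁ m
            (one_add_abs_add_log_one_add_two_zpow_mul_le hht h₁ h₂ m)) hX
      _ = 2 * X * √(h * L) * ∑ m ∈ range N, (9 / 10 : ℝ) ^ m := by
          rw [mul_sum]; congr 1; ext m; ring
      _ ≤ 2 * X * √(h * L) * 10 := by
          have := geom_sum_Ico_le_of_lt_one (m := 0) (n := N) (x := (9 / 10 : ℝ))
            (by norm_num) (by norm_num)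
          rw [← range_eq_Ico] at this
          gcongr
          linarith
      _ = 20 * X * √(h * L) := by ring
  linarith [abs_sub_le_of_dyadic_steps hf hstep (fun n => by positivity) hs h₁ h₂ hS]

end Chaining

lemma gaussianPDFReal_mul_exp_sub_le {v c x : ℝ} (hv : 0 < v) (hc : 1 ≤ c) :
    gaussianPDFReal 0 v.toNNReal x * (exp (x ^ 2 / (4 * (v * c))) - exp 4) ≤
      (√(2 * π * v))⁻¹ * exp (-2 * c) * exp (-(1 / (8 * v)) * x ^ 2) := by
  rw [gaussianPDFReal, Real.coe_toNNReal v hv.le, sub_zero]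
  rcases le_or_gt (x ^ 2) (16 * (v * c)) with hx | hx
  · have : exp (x ^ 2 / (4 * (v * c))) ≤ exp 4 :=
      exp_le_exp.2 ((div_le_iff₀ (by positivity)).2 (by linarith))
    exact (mul_nonpos_of_nonneg_of_nonpos (by positivity) (by linarith)).trans (by positivity)
  · have hexp : -x ^ 2 / (2 * v) + x ^ 2 / (4 * (v * c)) ≤ -2 * c + -(1 / (8 * v)) * x ^ 2 := by
      have h1 : x ^ 2 / (4 * (v * c)) ≤ x ^ 2 / (4 * v) :=
        div_le_div_of_nonneg_left (by positivity) (by positivity) (by nlinarith)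
      have h2 : 2 * c ≤ x ^ 2 / (8 * v) := by rw [le_div_iff₀ (by positivity)]; nlinarith
      have h3 : -x ^ 2 / (2 * v) + x ^ 2 / (4 * v) = -(x ^ 2 / (8 * v)) * 2 := by ring
      have h4 : -(1 / (8 * v)) * x ^ 2 = -(x ^ 2 / (8 * v)) := by ring
      linarith
    calc (√(2 * π * v))⁻¹ * exp (-x ^ 2 / (2 * v)) * (exp (x ^ 2 / (4 * (v * c))) - exp 4)
        ≤ (√(2 * π * v))⁻¹ * exp (-x ^ 2 / (2 * v)) * exp (x ^ 2 / (4 * (v * c))) := by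
          gcongr; linarith [exp_pos 4]
      _ = (√(2 * π * v))⁻¹ * exp (-x ^ 2 / (2 * v) + x ^ 2 / (4 * (v * c))) := by
          rw [exp_add, mul_assoc]
      _ ≤ (√(2 * π * v))⁻¹ * exp (-2 * c + -(1 / (8 * v)) * x ^ 2) := by gcongr
      _ = _ := by rw [exp_add]; ring

theorem lintegral_gaussianReal_exp_sq_sub_le {v c : ℝ} (hv : 0 < v) (hc : 1 ≤ c) :
    ∫⁻ x, ENNReal.ofReal (exp (x ^ 2 / (4 * (v * c))) - exp 4) ∂gaussianReal 0 v.toNNReal ≤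
      ENNReal.ofReal (2 * exp (-2 * c)) := by
  have hv' : v.toNNReal ≠ 0 := by simpa using hv
  have hmeas : Measurable fun x : ℝ => ENNReal.ofReal (exp (x ^ 2 / (4 * (v * c))) - exp 4) := by
    fun_prop
  set K := (√(2 * π * v))⁻¹ * exp (-2 * c)
  have hb : 0 < 1 / (8 * v) := by positivity
  rw [gaussianReal_of_var_ne_zero 0 hv', lintegral_withDensity_eq_lintegral_mul _
    (measurable_gaussianPDF 0 _) hmeas]
  calc ∫⁻ x, (gaussianPDF 0 v.toNNReal * fun x =>
          ENNReal.ofReal (exp (x ^ 2 / (4 * (v * c))) - exp 4)) x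
      ≤ ∫⁻ x, ENNReal.ofReal (K * exp (-(1 / (8 * v)) * x ^ 2)) := by
        refine lintegral_mono fun x => ?_
        rw [Pi.mul_apply, gaussianPDF, ← ENNReal.ofReal_mul (gaussianPDFReal_nonneg _ _ _)]
        exact ENNReal.ofReal_le_ofReal (gaussianPDFReal_mul_exp_sub_le hv hc)
    _ = ENNReal.ofReal (∫ x, K * exp (-(1 / (8 * v)) * x ^ 2)) := by
        rw [ofReal_integral_eq_lintegral_ofReal ((integrable_exp_neg_mul_sq hb).const_mul K)
          (ae_of_all _ fun x => by positivity)]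
    _ = ENNReal.ofReal (2 * exp (-2 * c)) := by
        have hsq : √(π / (1 / (8 * v))) = 2 * √(2 * π * v) := by
          rw [show π / (1 / (8 * v)) = 2 ^ 2 * (2 * π * v) by field_simp; ring,
            Real.sqrt_mul (by positivity), Real.sqrt_sq two_pos.le]
        have : √(2 * π * v) ≠ 0 := (Real.sqrt_pos.2 (by positivity)).ne'
        rw [integral_const_mul, integral_gaussian, hsq]
        congr 1
        simp only [K]
        field_simp

theorem lintegral_iSup_exp_sq_lt_top {ι Ω : Type*} [Countable ι] [MeasurableSpace Ω]
    {P : Measure Ω} [IsFiniteMeasure P] {W : ι → Ω → ℝ} {v c : ι → ℝ}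
    (hv : ∀ i, 0 < v i) (hc : ∀ i, 1 ≤ c i) (hW : ∀ i, Measurable (W i))
    (hmap : ∀ i, P.map (W i) = gaussianReal 0 (v i).toNNReal)
    (hsum : Summable fun i => exp (-2 * c i)) :
    ∫⁻ ω, ⨆ i, ENNReal.ofReal (exp (W i ω ^ 2 / (4 * (v i * c i)))) ∂P < ∞ := by
  set g : ι → ℝ → ℝ≥0∞ := fun i x => ENNReal.ofReal (exp (x ^ 2 / (4 * (v i * c i))) - exp 4)
  have hg : ∀ i, Measurable (g i) := fun i => by fun_prop
  -- `a ≤ exp 4 + (a - exp 4)⁺`, and unlike the `a`s the positive parts have summable means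
  have hpt : ∀ ω, ⨆ i, ENNReal.ofReal (exp (W i ω ^ 2 / (4 * (v i * c i)))) ≤
      ENNReal.ofReal (exp 4) + ∑' i, g i (W i ω) := fun ω => iSup_le fun i =>
    calc _ = ENNReal.ofReal (exp 4 + (exp (W i ω ^ 2 / (4 * (v i * c i))) - exp 4)) := by
          rw [add_sub_cancel]
      _ ≤ _ := ENNReal.ofReal_add_le.trans (add_le_add_right (ENNReal.le_tsum i) _)
  calc _ ≤ ∫⁻ ω, ENNReal.ofReal (exp 4) + ∑' i, g i (W i ω) ∂P := lintegral_mono hpt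
    _ = ENNReal.ofReal (exp 4) * P Set.univ + ∑' i, ∫⁻ x, g i x ∂(P.map (W i)) := by
        rw [lintegral_add_left measurable_const, lintegral_const,
          lintegral_tsum (f := fun i ω => g i (W i ω)) fun i => ((hg i).comp (hW i)).aemeasurable]
        simp_rw [lintegral_map (hg _) (hW _)]
    _ ≤ ENNReal.ofReal (exp 4) * P Set.univ + ∑' i, ENNReal.ofReal (2 * exp (-2 * c i)) := by
        gcongr with i
        rw [hmap i]
        exact lintegral_gaussianReal_exp_sq_sub_le (hv i) (hc i)
    _ < ∞ := by
        rw [← ENNReal.ofReal_tsum_of_nonneg (fun i => by positivity) (hsum.mul_left 2)]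
        exact ENNReal.add_lt_top.2 ⟨ENNReal.mul_lt_top ENNReal.ofReal_lt_top
          (measure_lt_top _ _), ENNReal.ofReal_lt_top⟩

lemma summable_exp_neg_two_mul_abs : Summable fun n : ℤ => exp (-2 * |(n : ℝ)|) := by
  have h : Summable fun n : ℕ => exp (n * -2) := summable_exp_nat_mul_iff.2 (by norm_num)
  refine Summable.of_nat_of_neg ?_ ?_ <;> refine h.congr fun n => ?_ <;> simp [mul_comm]

lemma summable_exp_neg_two_mul_dyadicWeight :
    Summable fun p : ℤ × ℕ => exp (-2 * dyadicWeight p.1 p.2) := by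
  have hk : Summable fun k : ℕ => 1 / (2 + (k : ℝ)) ^ 2 := by
    simpa [add_comm] using (summable_nat_add_iff 2).2 (Real.summable_one_div_nat_pow.2 one_lt_two)
  refine ((summable_exp_neg_two_mul_abs.mul_of_nonneg hk (fun _ => by positivity)
    (fun _ => by positivity)).mul_left (exp (-2))).congr fun p => ?_
  have h2k : (0 : ℝ) < 2 + p.2 := by positivity
  have hlog : exp (-2 * log (2 + p.2)) = 1 / (2 + (p.2 : ℝ)) ^ 2 := by
    rw [show -2 * log (2 + (p.2 : ℝ)) = -log ((2 + p.2) ^ 2) by rw [log_pow]; push_cast; ring,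
      exp_neg, exp_log (by positivity), one_div]
  rw [dyadicWeight, mul_add, mul_add, exp_add, exp_add, hlog, mul_one]
  ring

lemma abs_le_two_mul_sqrt_log_mul_sqrt {x a y : ℝ} (ha : 0 < a) (h : exp (x ^ 2 / (4 * a)) ≤ y) :
    |x| ≤ 2 * √(log y) * √a := by
  have hlog : x ^ 2 / (4 * a) ≤ log y := (le_log_iff_exp_le ((exp_pos _).trans_le h)).2 h
  have hlog₀ : 0 ≤ log y := (by positivity : 0 ≤ x ^ 2 / (4 * a)).trans hlog
  calc |x| ≤ √(2 ^ 2 * log y * a) :=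
        Real.abs_le_sqrt (by rw [div_le_iff₀ (by positivity)] at hlog; linarith)
    _ = 2 * √(log y) * √a := by
        rw [Real.sqrt_mul (by positivity), Real.sqrt_mul (by positivity), Real.sqrt_sq two_pos.le]

lemma sqrt_mul_one_add_log_le {s t ε : ℝ} (hε : 0 < ε) (hs : 0 ≤ s) (hst : s < t) :
    √((t - s) * (1 + log (t / (t - s)) + |log t|)) ≤
      √(1 + ε⁻¹) * √((t - s) * (1 + log (t / (t - s)) + ε * |log t|)) := by
  have hh : 0 < t - s := sub_pos.2 hst
  have hA : 0 ≤ log (t / (t - s)) := log_nonneg ((one_le_div hh).2 (by linarith))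
  rw [← Real.sqrt_mul (by positivity)]
  refine Real.sqrt_le_sqrt ?_
  have key : (1 + ε⁻¹) * ((t - s) * (1 + log (t / (t - s)) + ε * |log t|)) =
      (t - s) * (1 + log (t / (t - s)) + |log t|) + (t - s) * ε * |log t| +
        ε⁻¹ * ((t - s) * (1 + log (t / (t - s)))) := by
    field_simp; ring
  rw [key]
  have h₁ : 0 ≤ (t - s) * ε * |log t| := by positivity
  have h₂ : 0 ≤ ε⁻¹ * ((t - s) * (1 + log (t / (t - s)))) := by positivity
  linarith

def uniformModulusRatios (f : ℝ → ℝ) (ε : ℝ) : Set ℝ :=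
  {r | ∃ s t : ℝ, 0 < s ∧ s < t ∧
    r = |f t - f s| / √((t - s) * (1 + log (t / (t - s)) + ε * |log t|))}

theorem bddAbove_uniformModulusRatios_and_exp_sSup_sq_le {f : ℝ → ℝ} (hf : Continuous f) {ε : ℝ}
    (hε : 0 < ε) {y : ℝ}
    (hy : ∀ (n : ℤ) (k : ℕ), exp ((f ((k + 1) / 2 ^ n) - f (k / 2 ^ n)) ^ 2 /
      (4 * ((2 ^ n)⁻¹ * dyadicWeight n k))) ≤ y) :
    BddAbove (uniformModulusRatios f ε) ∧
      exp ((6400 * (1 + ε⁻¹))⁻¹ * sSup (uniformModulusRatios f ε) ^ 2) ≤ y := by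
  have hdyadic : ∀ (n : ℤ) (k : ℕ), |f ((k + 1) / 2 ^ n) - f (k / 2 ^ n)| ≤
      2 * √(log y) * √(dyadicWeight n k / 2 ^ n) := fun n k => by
    have := abs_le_two_mul_sqrt_log_mul_sqrt
      (mul_pos (by positivity) (zero_lt_one.trans_le (one_le_dyadicWeight n k))) (hy n k)
    rwa [inv_mul_eq_div] at this
  have hy₁ : 1 ≤ y := (one_le_exp (div_nonneg (sq_nonneg _)
    (by linarith [one_le_dyadicWeight 0 0]))).trans (hy 0 0)
  set M := 80 * √(log y) * √(1 + ε⁻¹)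
  have hM : ∀ r ∈ uniformModulusRatios f ε, r ≤ M := by
    rintro r ⟨s, t, hs, hst, rfl⟩
    have hA : 0 ≤ log (t / (t - s)) := log_nonneg ((one_le_div (by linarith)).2 (by linarith))
    rw [div_le_iff₀ (Real.sqrt_pos.2 (mul_pos (by linarith) (by positivity)))]
    calc |f t - f s| ≤ 40 * (2 * √(log y)) * √((t - s) * (1 + log (t / (t - s)) + |log t|)) :=
          abs_sub_le_of_abs_dyadic_increment_le hf (by positivity) hdyadic hs.le hst
      _ ≤ 40 * (2 * √(log y)) * (√(1 + ε⁻¹) *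
            √((t - s) * (1 + log (t / (t - s)) + ε * |log t|))) := by
          gcongr; exact sqrt_mul_one_add_log_le hε hs.le hst
      _ = _ := by ring
  have hsSup : sSup (uniformModulusRatios f ε) ≤ M :=
    csSup_le ⟨_, 1, 2, one_pos, one_lt_two, rfl⟩ hM
  have hsSup₀ : 0 ≤ sSup (uniformModulusRatios f ε) :=
    Real.sSup_nonneg fun r ⟨s, t, _, _, hr⟩ => hr ▸ by positivity
  refine ⟨⟨M, hM⟩, (exp_le_exp.2 ?_).trans_eq (exp_log (by linarith))⟩
  calc (6400 * (1 + ε⁻¹))⁻¹ * sSup (uniformModulusRatios f ε) ^ 2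
      ≤ (6400 * (1 + ε⁻¹))⁻¹ * M ^ 2 := by gcongr
    _ = log y := by
        simp only [M, mul_pow, Real.sq_sqrt (log_nonneg hy₁),
          Real.sq_sqrt (by positivity : (0 : ℝ) ≤ 1 + ε⁻¹)]
        field_simp
        ring

/-- **Theorem (exponential moments of the uniform modulus of continuity).**
For a standard Brownian motion `B` and `ε > 0`, the random variable
`M_B := sup_{0 < s < t < ∞} |B_t − B_s| / √((t−s)(1 + ln(t/(t−s)) + ε|ln t|))`
is such that `M_B²` admits exponential moments: there is `λ > 0` with
`E[exp(λ M_B²)] < ∞` (in particular the supremum is almost surely finite). -/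
theorem brownian_uniform_modulus_exp_moments
    {Ω : Type*} [MeasurableSpace Ω] (P : Measure Ω) [IsProbabilityMeasure P]
    (B : ℝ → Ω → ℝ) (hB : IsBrownianMotion P B) (ε : ℝ) (hε : 0 < ε) :
    ∃ lam : ℝ, 0 < lam ∧
      (∀ᵐ ω ∂P, BddAbove {r : ℝ | ∃ s t : ℝ, 0 < s ∧ s < t ∧
        r = |B t ω - B s ω| /
          Real.sqrt ((t - s) * (1 + Real.log (t / (t - s)) + ε * |Real.log t|))}) ∧
      ∫⁻ ω, ENNReal.ofReal (Real.exp (lam *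
        (sSup {r : ℝ | ∃ s t : ℝ, 0 < s ∧ s < t ∧
          r = |B t ω - B s ω| /
            Real.sqrt ((t - s) * (1 + Real.log (t / (t - s)) + ε * |Real.log t|))}) ^ 2)) ∂P
        < ⊤ := by
  obtain ⟨hmeas, -, hcont, hmap, -⟩ := hB
  set W : ℤ × ℕ → Ω → ℝ := fun p ω => B ((p.2 + 1) / 2 ^ p.1) ω - B (p.2 / 2 ^ p.1) ω
  set Y : Ω → ℝ≥0∞ := fun ω => ⨆ p : ℤ × ℕ,
    ENNReal.ofReal (exp (W p ω ^ 2 / (4 * ((2 ^ p.1)⁻¹ * dyadicWeight p.1 p.2))))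
  have hW : ∀ p, P.map (W p) = gaussianReal 0 ((2 : ℝ) ^ p.1)⁻¹.toNNReal := fun p => by
    have h := hmap (p.2 / 2 ^ p.1) ((p.2 + 1) / 2 ^ p.1) (by positivity) (by gcongr; linarith)
    rwa [show ((p.2 : ℝ) + 1) / 2 ^ p.1 - p.2 / 2 ^ p.1 = (2 ^ p.1)⁻¹ by ring] at h
  have hY : ∫⁻ ω, Y ω ∂P < ∞ := lintegral_iSup_exp_sq_lt_top (fun _ => by positivity)
    (fun p => one_le_dyadicWeight p.1 p.2) (fun _ => (hmeas _).sub (hmeas _)) hW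
    summable_exp_neg_two_mul_dyadicWeight
  have hYfin : ∀ᵐ ω ∂P, Y ω < ∞ :=
    ae_lt_top (Measurable.iSup fun p => by fun_prop) hY.ne
  have hmod : ∀ᵐ ω ∂P, BddAbove (uniformModulusRatios (B · ω) ε) ∧
      exp ((6400 * (1 + ε⁻¹))⁻¹ * sSup (uniformModulusRatios (B · ω) ε) ^ 2) ≤
        (Y ω).toReal := by
    filter_upwards [hYfin] with ω hω
    exact bddAbove_uniformModulusRatios_and_exp_sSup_sq_le (hcont ω) hε fun n k =>
      (ENNReal.ofReal_le_iff_le_toReal hω.ne).1 (le_iSup (fun p : ℤ × ℕ => ENNReal.ofReal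
        (exp (W p ω ^ 2 / (4 * ((2 ^ p.1)⁻¹ * dyadicWeight p.1 p.2))))) (n, k))
  refine ⟨(6400 * (1 + ε⁻¹))⁻¹, by positivity, hmod.mono fun ω h => h.1, ?_⟩
  calc _ ≤ ∫⁻ ω, Y ω ∂P := lintegral_mono_ae <| hmod.mono fun ω h =>
        ENNReal.ofReal_le_of_le_toReal h.2
    _ < ∞ := hY
end

section
/- Let 0 < ε < 1. For all a > 0 and all (t, h) ∈ (ℝ₊*)², one has 1/(1 + √(ε|ln a|)) ≤ w(a t, a h)/(√a · w(t, h)) ≤ 1 + √(ε|ln a|). -/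
/-- The function `w(t,h) = √(h (1 + ln(t/h) + ε|ln t|))` for `0 < h ≤ t`,
and `w(t,h) = w(t,t)` for `0 < t < h`; equivalently the formula with `h` replaced
by `min t h`. -/
noncomputable def w (ε t h : ℝ) : ℝ :=
  Real.sqrt (min t h * (1 + Real.log (t / min t h) + ε * |Real.log t|))

/-- **Proposition (near scaling-invariance of `w`).** For `0 < ε < 1`, all `a > 0`
and all `t, h > 0`,
`1/(1 + √(ε|ln a|)) ≤ w(at, ah) / (√a · w(t,h)) ≤ 1 + √(ε|ln a|)`. -/
theorem w_scaling (ε : ℝ) (hε₀ : 0 < ε) (hε₁ : ε < 1)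
    (a t h : ℝ) (ha : 0 < a) (ht : 0 < t) (hh : 0 < h) :
    1 / (1 + Real.sqrt (ε * |Real.log a|)) ≤ w ε (a * t) (a * h) / (Real.sqrt a * w ε t h) ∧
      w ε (a * t) (a * h) / (Real.sqrt a * w ε t h) ≤ 1 + Real.sqrt (ε * |Real.log a|) := by
  set m := min t h with hm_def
  have hm : 0 < m := lt_min ht hh
  have hmt : m ≤ t := min_le_left t h
  have hmin : min (a * t) (a * h) = a * m := by
    rw [hm_def]
    rcases le_total t h with h' | h'
    · rw [min_eq_left h', min_eq_left (by nlinarith)]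
    · rw [min_eq_right h', min_eq_right (by nlinarith)]
  have hdiv : (a * t) / (a * m) = t / m := by
    rw [mul_div_mul_left _ _ ha.ne']
  set L := ε * |Real.log a| with hL_def
  have hL : 0 ≤ L := mul_nonneg hε₀.le (abs_nonneg _)
  set r := Real.sqrt L with hr_def
  have hr : 0 ≤ r := Real.sqrt_nonneg _
  have hr2 : r ^ 2 = L := Real.sq_sqrt hL
  set S := 1 + Real.log (t / m) + ε * |Real.log t| with hS_def
  set S' := 1 + Real.log (t / m) + ε * |Real.log (a * t)| with hS'_def
  have hlog : 0 ≤ Real.log (t / m) := Real.log_nonneg ((one_le_div hm).2 hmt)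
  have habs : 0 ≤ ε * |Real.log t| := mul_nonneg hε₀.le (abs_nonneg _)
  have habs' : 0 ≤ ε * |Real.log (a * t)| := mul_nonneg hε₀.le (abs_nonneg _)
  have hS1 : 1 ≤ S := by rw [hS_def]; linarith
  have hS'1 : 1 ≤ S' := by rw [hS'_def]; linarith
  have hlogmul : Real.log (a * t) = Real.log a + Real.log t :=
    Real.log_mul ha.ne' ht.ne'
  have hA : |Real.log (a * t)| ≤ |Real.log a| + |Real.log t| := by
    rw [hlogmul]; exact abs_add_le _ _
  have hB : |Real.log t| ≤ |Real.log a| + |Real.log (a * t)| := by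
    have : Real.log t = -Real.log a + Real.log (a * t) := by rw [hlogmul]; ring
    rw [this]
    calc |(-Real.log a + Real.log (a * t))| ≤ |(-Real.log a)| + |Real.log (a * t)| :=
          abs_add_le _ _
      _ = |Real.log a| + |Real.log (a * t)| := by rw [abs_neg]
  have key1 : S' ≤ S + L := by
    rw [hS_def, hS'_def, hL_def]
    nlinarith [mul_le_mul_of_nonneg_left hA hε₀.le]
  have key2 : S ≤ S' + L := by
    rw [hS_def, hS'_def, hL_def]
    nlinarith [mul_le_mul_of_nonneg_left hB hε₀.le]
  have kk1 : S' ≤ S * (1 + r) ^ 2 := by nlinarith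
  have kk2 : S ≤ S' * (1 + r) ^ 2 := by nlinarith
  have hwth : w ε t h = Real.sqrt (m * S) := by rw [w, ← hm_def, ← hS_def]
  have hwat : w ε (a * t) (a * h) = Real.sqrt (a * m * S') := by
    rw [w, hmin, hdiv, ← hS'_def]
  have hden : Real.sqrt a * w ε t h = Real.sqrt (a * m * S) := by
    rw [hwth, ← Real.sqrt_mul ha.le, mul_assoc]
  have hdenpos : 0 < Real.sqrt (a * m * S) :=
    Real.sqrt_pos.2 (by positivity)
  have hnumnn : 0 ≤ Real.sqrt (a * m * S') := Real.sqrt_nonneg _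
  have h1r : (0:ℝ) < 1 + r := by linarith
  constructor
  · rw [hden, hwat, div_le_div_iff₀ h1r hdenpos, one_mul]
    calc Real.sqrt (a * m * S) ≤ Real.sqrt (a * m * (S' * (1 + r) ^ 2)) := by
          apply Real.sqrt_le_sqrt
          exact mul_le_mul_of_nonneg_left kk2 (by positivity)
      _ = Real.sqrt (a * m * S') * (1 + r) := by
          rw [show a * m * (S' * (1 + r) ^ 2) = (a * m * S') * (1 + r) ^ 2 by ring,
            Real.sqrt_mul (by positivity), Real.sqrt_sq h1r.le]
  · rw [hden, hwat, div_le_iff₀ hdenpos]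
    calc Real.sqrt (a * m * S') ≤ Real.sqrt (a * m * (S * (1 + r) ^ 2)) := by
          apply Real.sqrt_le_sqrt
          exact mul_le_mul_of_nonneg_left kk1 (by positivity)
      _ = (1 + r) * Real.sqrt (a * m * S) := by
          rw [show a * m * (S * (1 + r) ^ 2) = (a * m * S) * (1 + r) ^ 2 by ring,
            Real.sqrt_mul (by positivity), Real.sqrt_sq h1r.le, mul_comm]
end

section
/- Let a > 0 and 0 < h ≤ a. Then ∫₀ʰ u^{−1/2} (ln(a/u))^{−1/2} du ≤ 2 √π · √h. -/
/-!
Lowering `a` to `h` only increases the integrand, as `log (a / u) ≥ log (h / u) > 0` on `(0, h)`.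
For `a = h` the substitution `u = h e^{-s}` turns the integral into
`√h ∫₀^∞ s^{-1/2} e^{-s/2} ds = √h · √2 · Γ(1/2) = √(2π) √h`.
-/

open MeasureTheory Set Real

section ExpSubstitution

variable {E : Type*} [NormedAddCommGroup E] [NormedSpace ℝ E] {c : ℝ}

lemma image_mul_exp_neg_Ioi (hc : 0 < c) : (fun s => c * exp (-s)) '' Ioi 0 = Ioo 0 c := by
  ext u
  constructor
  · rintro ⟨s, hs, rfl⟩
    exact ⟨by positivity, mul_lt_of_lt_one_right hc (exp_lt_one_iff.2 (neg_lt_zero.2 hs))⟩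
  · rintro ⟨hu, huc⟩
    refine ⟨log (c / u), log_pos ((one_lt_div hu).2 huc), ?_⟩
    simp only [exp_neg, exp_log (div_pos hc hu)]
    field_simp

lemma hasDerivAt_mul_exp_neg (s : ℝ) :
    HasDerivAt (fun s => c * exp (-s)) (-(c * exp (-s))) s := by
  simpa using ((hasDerivAt_neg s).exp).const_mul c

lemma injective_mul_exp_neg (hc : 0 < c) : Function.Injective (fun s => c * exp (-s)) :=
  fun _ _ hst => neg_injective (exp_injective (mul_left_cancel₀ hc.ne' hst))

lemma integrableOn_Ioo_iff_integrableOn_Ioi_mul_exp_neg (hc : 0 < c) (f : ℝ → E) :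
    IntegrableOn f (Ioo 0 c) ↔
      IntegrableOn (fun s => (c * exp (-s)) • f (c * exp (-s))) (Ioi 0) := by
  rw [← image_mul_exp_neg_Ioi hc, integrableOn_image_iff_integrableOn_abs_deriv_smul
    measurableSet_Ioi (fun s _ => (hasDerivAt_mul_exp_neg s).hasDerivWithinAt)
    (injective_mul_exp_neg hc).injOn]
  simp_rw [abs_neg, abs_of_pos (mul_pos hc (exp_pos _))]

lemma integral_Ioo_eq_integral_Ioi_mul_exp_neg (hc : 0 < c) (f : ℝ → E) :
    ∫ u in Ioo 0 c, f u = ∫ s in Ioi 0, (c * exp (-s)) • f (c * exp (-s)) := by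
  rw [← image_mul_exp_neg_Ioi hc, integral_image_eq_integral_abs_deriv_smul
    measurableSet_Ioi (fun s _ => (hasDerivAt_mul_exp_neg s).hasDerivWithinAt)
    (injective_mul_exp_neg hc).injOn]
  simp_rw [abs_neg, abs_of_pos (mul_pos hc (exp_pos _))]

end ExpSubstitution

lemma integral_rpow_neg_half_mul_exp_neg_half_Ioi :
    ∫ s in Ioi (0 : ℝ), s ^ ((1 : ℝ) / 2 - 1) * exp (-(1 / 2 * s)) = √2 * √π := by
  rw [integral_rpow_mul_exp_neg_mul_Ioi (by norm_num) (by norm_num), Gamma_one_half_eq,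
    one_div_one_div, sqrt_eq_rpow 2]

lemma mul_exp_neg_smul_rpow_neg_half_mul_log_div_rpow_neg_half {c s : ℝ} (hc : 0 < c) :
    (c * exp (-s)) • ((c * exp (-s)) ^ (-(1:ℝ) / 2) * log (c / (c * exp (-s))) ^ (-(1:ℝ) / 2))
      = √c * (s ^ ((1 : ℝ) / 2 - 1) * exp (-(1 / 2 * s))) := by
  have hlog : log (c / (c * exp (-s))) = s := by
    rw [div_mul_cancel_left₀ hc.ne', ← exp_neg, neg_neg, log_exp]
  have hc_rpow : c * c ^ (-(1:ℝ) / 2) = c ^ ((1:ℝ) / 2) := by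
    rw [← rpow_one_add' hc.le (by norm_num)]; norm_num
  have hexp : exp (-s) * exp (-s * (-(1:ℝ) / 2)) = exp (-(1 / 2 * s)) := by
    rw [← exp_add]; ring_nf
  rw [smul_eq_mul, hlog, mul_rpow hc.le (exp_pos _).le, ← exp_mul, sqrt_eq_rpow]
  calc c * exp (-s) * (c ^ (-(1:ℝ) / 2) * exp (-s * (-(1:ℝ) / 2)) * s ^ (-(1:ℝ) / 2))
      = (c * c ^ (-(1:ℝ) / 2)) * (exp (-s) * exp (-s * (-(1:ℝ) / 2))) * s ^ (-(1:ℝ) / 2) := by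
        ring
    _ = _ := by rw [hc_rpow, hexp]; norm_num; ring

lemma integrableOn_rpow_neg_half_mul_exp_neg_half_Ioi :
    IntegrableOn (fun s : ℝ => s ^ ((1 : ℝ) / 2 - 1) * exp (-(1 / 2 * s))) (Ioi 0) :=
  .of_integral_ne_zero (by rw [integral_rpow_neg_half_mul_exp_neg_half_Ioi]; positivity)

lemma integrableOn_rpow_neg_half_mul_log_div_rpow_neg_half {c : ℝ} (hc : 0 < c) :
    IntegrableOn (fun u => u ^ (-(1:ℝ) / 2) * log (c / u) ^ (-(1:ℝ) / 2)) (Ioo 0 c) := by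
  rw [integrableOn_Ioo_iff_integrableOn_Ioi_mul_exp_neg hc]
  exact IntegrableOn.congr_fun (integrableOn_rpow_neg_half_mul_exp_neg_half_Ioi.const_mul √c)
    (fun _ _ => (mul_exp_neg_smul_rpow_neg_half_mul_log_div_rpow_neg_half hc).symm)
    measurableSet_Ioi

lemma integral_rpow_neg_half_mul_log_div_rpow_neg_half {c : ℝ} (hc : 0 < c) :
    ∫ u in Ioo 0 c, u ^ (-(1:ℝ) / 2) * log (c / u) ^ (-(1:ℝ) / 2) = √2 * √π * √c := by
  simp_rw [integral_Ioo_eq_integral_Ioi_mul_exp_neg hc,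
    mul_exp_neg_smul_rpow_neg_half_mul_log_div_rpow_neg_half hc, integral_const_mul,
    integral_rpow_neg_half_mul_exp_neg_half_Ioi]
  ring

lemma log_div_rpow_le_log_div_rpow {a c u z : ℝ} (hu : 0 < u) (huc : u < c) (hca : c ≤ a)
    (hz : z ≤ 0) : log (a / u) ^ z ≤ log (c / u) ^ z :=
  rpow_le_rpow_of_nonpos (log_pos ((one_lt_div hu).2 huc))
    (log_le_log (div_pos (hu.trans huc) hu) (div_le_div_of_nonneg_right hca hu.le)) hz

theorem integral_inv_sqrt_mul_inv_sqrt_log_le_general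
    (a h : ℝ) (hh : 0 < h) (hha : h ≤ a) :
    (∫ u in Set.Ioc (0:ℝ) h,
        u ^ (-(1:ℝ) / 2) * (Real.log (a / u)) ^ (-(1:ℝ) / 2)) ≤
      2 * Real.sqrt Real.pi * Real.sqrt h := by
  calc ∫ u in Ioc 0 h, u ^ (-(1:ℝ) / 2) * log (a / u) ^ (-(1:ℝ) / 2)
      = ∫ u in Ioo 0 h, u ^ (-(1:ℝ) / 2) * log (a / u) ^ (-(1:ℝ) / 2) :=
        integral_Ioc_eq_integral_Ioo
    _ ≤ ∫ u in Ioo 0 h, u ^ (-(1:ℝ) / 2) * log (h / u) ^ (-(1:ℝ) / 2) := by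
        refine setIntegral_mono_of_nonneg (fun u hu => ?_) (fun u hu => ?_)
          (integrableOn_rpow_neg_half_mul_log_div_rpow_neg_half hh)
        · exact mul_nonneg (rpow_nonneg hu.1.le _)
            (rpow_nonneg (log_nonneg ((one_le_div hu.1).2 (hu.2.le.trans hha))) _)
        · exact mul_le_mul_of_nonneg_left
            (log_div_rpow_le_log_div_rpow hu.1 hu.2 hha (by norm_num)) (rpow_nonneg hu.1.le _)
    _ = √2 * √π * √h := integral_rpow_neg_half_mul_log_div_rpow_neg_half hh
    _ ≤ 2 * √π * √h := by gcongr; exact sqrt_le_iff.2 ⟨by norm_num, by norm_num⟩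

/-- Let `a > 0` and `0 < h ≤ a`. Then `∫₀ʰ u^{-1/2} (ln(a/u))^{-1/2} du ≤ 2 √π √h`. -/
theorem integral_inv_sqrt_mul_inv_sqrt_log_le
    (a h : ℝ) (ha : 0 < a) (hh : 0 < h) (hha : h ≤ a) :
    (∫ u in Set.Ioc (0:ℝ) h,
        u ^ (-(1:ℝ) / 2) * (Real.log (a / u)) ^ (-(1:ℝ) / 2)) ≤
      2 * Real.sqrt Real.pi * Real.sqrt h :=
  integral_inv_sqrt_mul_inv_sqrt_log_le_general a h hh hha
end

section
/- Let c > 1, ε > 0, ξ ≥ 0, t ≥ 1, and let f : [0, t] → ℝ be a continuous function such that ∫₀ᵗ ∫₀ᵗ ( exp(|f(x) − f(y)|² / (2c|x − y|)) − 1 ) dx dy ≤ t^{2(1+ε)} ξ. Then for all 0 ≤ s ≤ t with h := t − s > 0, |f(t) − f(s)| ≤ 8√(2c) · ( √(ln(4ξ + 1)) + √2 (1 + √π) ) · √( h (1 + ln(t/h) + ε |ln t|) ). -/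
/-!
Garsia–Rodemich–Rumsey chaining. Let `Φ(x, y) = exp (|f x - f y|² / (2c|x - y|)) - 1` and
`I x = ∫ Φ(x, y) dy` over `(s, t)`, so that `∫ I ≤ b := t^(2(1+ε)) ξ`. By Markov's
inequality, every interval `J` contains a point `y` with `I y ≤ 3b/|J|` and
`Φ(x, y) ≤ 3 I x / |J|` for a prescribed `x`. Iterating along the intervals of length `h/4ⁿ`
at `s` (and at `t`) gives points converging to `s` (and `t`) whose consecutive increments
satisfy `|Δf|² ≤ 2c (h/4ⁿ) log (1 + 36·16ⁿ b/h²)`. Summing the resulting series along both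
chains and joining them by one further link gives
`|f t - f s| ≤ √(2ch) (18 + 5 √(log (1 + b/h²)))`, and
`log (1 + b/h²) ≤ log (1 + ξ) + 2 log (t/h) + 2ε log t`.
-/

open MeasureTheory Set Filter Topology Real
open scoped ENNReal

section Selection

variable {α : Type*} [MeasurableSpace α] {μ : Measure α}

theorem measure_three_mul_div_lt_le {g : α → ℝ≥0∞} (hg : AEMeasurable g μ) {G m : ℝ≥0∞}
    (hG : ∫⁻ x, g x ∂μ ≤ G) (hm0 : m ≠ 0) (hm : m ≠ ∞) :
    μ {x | 3 * G / m < g x} ≤ m / 3 := by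
  rcases eq_or_ne G 0 with rfl | hG0
  · have hg0 : g =ᵐ[μ] 0 := (lintegral_eq_zero_iff' hg).1 (le_zero_iff.1 hG)
    have hnull : μ {x | g x ≠ 0} = 0 := hg0
    simp [pos_iff_ne_zero, hnull]
  rcases eq_or_ne G ∞ with rfl | hGt
  · simp [ENNReal.mul_top, ENNReal.top_div_of_ne_top hm]
  set ε := 3 * G / m
  have hε0 : ε ≠ 0 := by simp [ε, hG0, hm]
  have hεt : ε ≠ ∞ := by simp [ε, ENNReal.div_eq_top, ENNReal.mul_eq_top, hGt, hm0]
  have hmarkov : μ {x | ε < g x} * ε ≤ m / 3 * ε :=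
    calc μ {x | ε < g x} * ε ≤ ε * μ {x | ε ≤ g x} := by
          rw [mul_comm]; gcongr; exact le_of_lt
      _ ≤ G := (mul_meas_ge_le_lintegral₀ hg ε).trans hG
      _ = m / 3 * ε := by
          simp only [ε, div_eq_mul_inv]
          rw [mul_mul_mul_comm, mul_comm m, mul_mul_mul_comm, ENNReal.mul_inv_cancel hm0 hm,
            mul_one, mul_right_comm, ENNReal.mul_inv_cancel three_ne_zero ENNReal.ofNat_ne_top,
            one_mul]
  exact (ENNReal.mul_le_mul_iff_left hε0 hεt).1 hmarkov

theorem exists_mem_le_three_mul_div {s : Set α} (hs0 : μ s ≠ 0) (hs : μ s ≠ ∞)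
    {g₁ g₂ : α → ℝ≥0∞} (hg₁ : AEMeasurable g₁ (μ.restrict s))
    (hg₂ : AEMeasurable g₂ (μ.restrict s))
    {G₁ G₂ : ℝ≥0∞} (h₁ : ∫⁻ x in s, g₁ x ∂μ ≤ G₁) (h₂ : ∫⁻ x in s, g₂ x ∂μ ≤ G₂) :
    ∃ x ∈ s, g₁ x ≤ 3 * G₁ / μ s ∧ g₂ x ≤ 3 * G₂ / μ s := by
  by_contra! hbad
  have hcover : s ⊆ {x | 3 * G₁ / μ s < g₁ x} ∪ {x | 3 * G₂ / μ s < g₂ x} := by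
    intro x hx
    by_cases hx₁ : g₁ x ≤ 3 * G₁ / μ s
    · exact Or.inr (hbad x hx hx₁)
    · exact Or.inl (not_le.1 hx₁)
  have hle : μ s ≤ μ s / 3 + μ s / 3 :=
    calc μ s = μ.restrict s s := (Measure.restrict_apply_self μ s).symm
      _ ≤ μ.restrict s {x | 3 * G₁ / μ s < g₁ x} +
            μ.restrict s {x | 3 * G₂ / μ s < g₂ x} :=
          (measure_mono hcover).trans (measure_union_le _ _)
      _ ≤ μ s / 3 + μ s / 3 :=
          add_le_add (measure_three_mul_div_lt_le hg₁ h₁ hs0 hs)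
            (measure_three_mul_div_lt_le hg₂ h₂ hs0 hs)
  have hlt : μ s / 3 + μ s / 3 < μ s := by
    conv_rhs => rw [← ENNReal.add_thirds (μ s)]
    exact ENNReal.lt_add_right (by finiteness) (by simp [hs0])
  exact hlt.not_ge hle

theorem exists_chain_le_three_mul_div [SFinite μ] {Φ : α → α → ℝ≥0∞}
    (hΦ : Measurable (Function.uncurry Φ))
    {T : Set α} {B : ℝ≥0∞} (hB : ∫⁻ x in T, ∫⁻ y in T, Φ x y ∂μ ∂μ ≤ B) {J : ℕ → Set α}
    (hJT : ∀ n, J n ⊆ T) (hJ0 : ∀ n, μ (J n) ≠ 0) (hJ : ∀ n, μ (J n) ≠ ∞) (x₀ : α) :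
    ∃ w : ℕ → α, w 0 = x₀ ∧ ∀ n, w (n + 1) ∈ J n ∧
      ∫⁻ y in T, Φ (w (n + 1)) y ∂μ ≤ 3 * B / μ (J n) ∧
      Φ (w n) (w (n + 1)) ≤ 3 * (∫⁻ y in T, Φ (w n) y ∂μ) / μ (J n) := by
  have hI : Measurable fun x => ∫⁻ y in T, Φ x y ∂μ := hΦ.lintegral_prod_right'
  have step : ∀ n x, ∃ y ∈ J n, ∫⁻ z in T, Φ y z ∂μ ≤ 3 * B / μ (J n) ∧
      Φ x y ≤ 3 * (∫⁻ z in T, Φ x z ∂μ) / μ (J n) := fun n x =>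
    exists_mem_le_three_mul_div (hJ0 n) (hJ n) hI.aemeasurable
      (hΦ.comp measurable_prodMk_left).aemeasurable ((lintegral_mono_set (hJT n)).trans hB)
      (lintegral_mono_set (hJT n))
  choose next hnext using step
  exact ⟨fun n => Nat.rec x₀ next n, rfl, fun n => hnext n _⟩

end Selection

/-- `Ψ(|F x - F y| / μ(|x - y|))` for `Ψ(u) = exp (u²/2) - 1` and `μ(u) = √(c u)`. -/
noncomputable def grrKernel (c : ℝ) (F : ℝ → ℝ) (x y : ℝ) : ℝ≥0∞ :=
  ENNReal.ofReal (exp (|F x - F y| ^ 2 / (2 * c * |x - y|)) - 1)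

theorem measurable_grrKernel {c : ℝ} {F : ℝ → ℝ} (hF : Measurable F) :
    Measurable (Function.uncurry (grrKernel c F)) := by
  unfold grrKernel Function.uncurry
  fun_prop

theorem abs_sub_le_sqrt_of_grrKernel_le {c r ℓ x y : ℝ} {F : ℝ → ℝ} (hc : 0 < c) (hr : 0 ≤ r)
    (hxy : |x - y| ≤ ℓ) (h : grrKernel c F x y ≤ ENNReal.ofReal r) :
    |F x - F y| ≤ √(2 * c * ℓ * log (1 + r)) := by
  rcases eq_or_ne x y with rfl | hne
  · simp
  have hd : 0 < |x - y| := abs_pos.2 (sub_ne_zero.2 hne)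
  have hq : |F x - F y| ^ 2 / (2 * c * |x - y|) ≤ log (1 + r) := by
    rw [le_log_iff_exp_le (by linarith)]
    linarith [(ENNReal.ofReal_le_ofReal_iff hr).1 h]
  rw [div_le_iff₀ (by positivity)] at hq
  refine abs_le_sqrt ?_
  calc (F x - F y) ^ 2 = |F x - F y| ^ 2 := (sq_abs _).symm
    _ ≤ log (1 + r) * (2 * c * |x - y|) := hq
    _ ≤ 2 * c * ℓ * log (1 + r) := by
      rw [mul_comm]; gcongr; exact log_nonneg (by linarith)

theorem log_one_add_mul_le {A κ : ℝ} (hA : 1 ≤ A) (hκ : 0 ≤ κ) :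
    log (1 + A * κ) ≤ log A + log (1 + κ) := by
  rw [← log_mul (by positivity) (by positivity)]
  gcongr
  nlinarith

theorem thirty_six_mul_sixteen_pow_le_exp (n : ℕ) : (36 : ℝ) * 16 ^ n ≤ exp (4 * (n + 1)) := by
  have h4 : (36 : ℝ) ≤ exp 4 :=
    calc (36 : ℝ) ≤ 2.7 ^ 4 := by norm_num
      _ ≤ exp 1 ^ 4 := by gcongr; linarith [exp_one_gt_d9]
      _ = exp 4 := by rw [← exp_nat_mul]; norm_num
  calc (36 : ℝ) * 16 ^ n ≤ exp 4 * exp 4 ^ n := by gcongr; linarith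
    _ = exp (4 * (n + 1)) := by rw [← exp_nat_mul, ← exp_add]; ring_nf

theorem abs_sub_le_of_grrKernel_le_dyadic {c h κ x y : ℝ} {F : ℝ → ℝ} {n : ℕ} (hc : 0 < c)
    (hh : 0 < h) (hκ : 0 ≤ κ) (hxy : |x - y| ≤ h / 4 ^ n)
    (hΦ : grrKernel c F x y ≤ ENNReal.ofReal (36 * 16 ^ n * κ)) :
    |F x - F y| ≤ (1 / 2) ^ n * (√(2 * c * h) * (√(log (1 + κ)) + 2 * (n + 1))) := by
  have hK : 0 ≤ log (1 + κ) := log_nonneg (by linarith)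
  have hlog : log (1 + 36 * 16 ^ n * κ) ≤ (√(log (1 + κ)) + 2 * (n + 1)) ^ 2 :=
    calc log (1 + 36 * 16 ^ n * κ) ≤ log (36 * 16 ^ n) + log (1 + κ) :=
          log_one_add_mul_le (one_le_mul_of_one_le_of_one_le (by norm_num)
            (one_le_pow₀ (by norm_num))) hκ
      _ ≤ 4 * (n + 1) + log (1 + κ) := by
          gcongr
          exact (log_le_iff_le_exp (by positivity)).2 (thirty_six_mul_sixteen_pow_le_exp n)
      _ ≤ (√(log (1 + κ)) + 2 * (n + 1)) ^ 2 := by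
          nlinarith [sq_sqrt hK, sqrt_nonneg (log (1 + κ))]
  refine (abs_sub_le_sqrt_of_grrKernel_le hc (by positivity) hxy hΦ).trans ?_
  rw [sqrt_le_left (by positivity)]
  calc 2 * c * (h / 4 ^ n) * log (1 + 36 * 16 ^ n * κ)
      ≤ 2 * c * (h / 4 ^ n) * (√(log (1 + κ)) + 2 * (n + 1)) ^ 2 := by gcongr
    _ = _ := by
      rw [mul_pow, mul_pow, sq_sqrt (by positivity), ← pow_mul, mul_comm n, pow_mul]
      field_simp
      rw [← mul_pow]
      norm_num

theorem hasSum_half_pow_mul_add (a : ℝ) :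
    HasSum (fun n : ℕ => (1 / 2 : ℝ) ^ n * (a + 2 * (n + 1))) (2 * a + 8) := by
  have h := (hasSum_geometric_two.mul_left (a + 2)).add
    ((hasSum_coe_mul_geometric_of_norm_lt_one (r := (1 / 2 : ℝ)) (by norm_num)).mul_left 2)
  have e : (2 * a + 8 : ℝ) = (a + 2) * 2 + 2 * (1 / 2 / (1 - 1 / 2) ^ 2) := by norm_num; ring
  have hf : (fun n : ℕ => (1 / 2 : ℝ) ^ n * (a + 2 * (n + 1))) =
      fun n : ℕ => (a + 2) * (1 / 2) ^ n + 2 * (n * (1 / 2) ^ n) := funext fun n => by ring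
  rwa [e, hf]

theorem abs_sub_le_of_tendsto_of_abs_sub_succ_le {y : ℕ → ℝ} {L C a : ℝ}
    (hy : Tendsto y atTop (𝓝 L))
    (hstep : ∀ n, |y n - y (n + 1)| ≤ (1 / 2) ^ n * (C * (a + 2 * (n + 1)))) :
    |y 0 - L| ≤ C * (2 * a + 8) := by
  have hsum :
      HasSum (fun n : ℕ => (1 / 2 : ℝ) ^ n * (C * (a + 2 * (n + 1)))) (C * (2 * a + 8)) := by
    simpa only [mul_left_comm C] using (hasSum_half_pow_mul_add a).mul_left C
  rw [← hsum.tsum_eq, ← Real.dist_eq]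
  exact dist_le_tsum_of_dist_le_of_tendsto₀ _ (fun n => (Real.dist_eq _ _).trans_le (hstep n))
    hsum.summable hy

theorem three_mul_ofReal_div_ofReal {r x : ℝ} (hx : 0 < x) :
    3 * ENNReal.ofReal r / ENNReal.ofReal x = ENNReal.ofReal (3 * r / x) := by
  rw [ENNReal.ofReal_div_of_pos hx, ENNReal.ofReal_mul zero_le_three, ENNReal.ofReal_ofNat]

theorem three_mul_div_mul_div_four_pow {b h : ℝ} (hh : 0 < h) (n : ℕ) :
    3 * (3 * b / (h / 4 ^ n)) / (h / 4 ^ (n + 1)) = 36 * 16 ^ n * (b / h ^ 2) := by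
  rw [show (16 : ℝ) ^ n = 4 ^ n * 4 ^ n by rw [← mul_pow]; norm_num]
  field_simp
  ring

theorem exists_abs_sub_le_of_dyadic_chain {c b h p : ℝ} {F : ℝ → ℝ} (hc : 0 < c) (hb : 0 ≤ b)
    (hh : 0 < h) (hF : Continuous F) {T : Set ℝ}
    (hB : ∫⁻ x in T, ∫⁻ y in T, grrKernel c F x y ≤ ENNReal.ofReal b) {a : ℕ → ℝ}
    (hT : Ioo (a 0) (a 0 + h) ⊆ T)
    (hnest : ∀ n, Ioo (a (n + 1)) (a (n + 1) + h / 4 ^ (n + 1)) ⊆ Ioo (a n) (a n + h / 4 ^ n))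
    (hp : ∀ n, p ∈ Icc (a n) (a n + h / 4 ^ n)) (x₀ : ℝ) :
    ∃ y ∈ Ioo (a 0) (a 0 + h), ∫⁻ z in T, grrKernel c F y z ≤ ENNReal.ofReal (3 * b / h) ∧
      grrKernel c F x₀ y ≤ 3 * (∫⁻ z in T, grrKernel c F x₀ z) / ENNReal.ofReal h ∧
      |F y - F p| ≤ √(2 * c * h) * (2 * √(log (1 + b / h ^ 2)) + 8) := by
  set ℓ : ℕ → ℝ := fun n => h / 4 ^ n
  set J : ℕ → Set ℝ := fun n => Ioo (a n) (a n + ℓ n)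
  have hℓ : ∀ n, 0 < ℓ n := fun n => by positivity
  have hJ0 : J 0 = Ioo (a 0) (a 0 + h) := by simp [J, ℓ]
  have hvol : ∀ n, volume (J n) = ENNReal.ofReal (ℓ n) := fun n => by simp [J, Real.volume_Ioo]
  have hJT : ∀ n, J n ⊆ T := fun n =>
    (antitone_nat_of_succ_le hnest (Nat.zero_le n)).trans (hJ0 ▸ hT)
  obtain ⟨w, rfl, hw⟩ := exists_chain_le_three_mul_div (measurable_grrKernel hF.measurable) hB
    hJT (fun n => by simp [hvol, hℓ n]) (fun n => by simp [hvol]) x₀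
  have hI : ∀ n, ∫⁻ z in T, grrKernel c F (w (n + 1)) z ≤ ENNReal.ofReal (3 * b / ℓ n) :=
    fun n => by simpa only [hvol, three_mul_ofReal_div_ofReal (hℓ n)] using (hw n).2.1
  have hstep : ∀ n, grrKernel c F (w (n + 1)) (w (n + 2)) ≤
      ENNReal.ofReal (36 * 16 ^ n * (b / h ^ 2)) := fun n =>
    calc grrKernel c F (w (n + 1)) (w (n + 2))
        ≤ 3 * ENNReal.ofReal (3 * b / ℓ n) / ENNReal.ofReal (ℓ (n + 1)) := by
          rw [← hvol]; exact (hw (n + 1)).2.2.trans (by gcongr; exact hI n)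
      _ = ENNReal.ofReal (36 * 16 ^ n * (b / h ^ 2)) := by
          rw [three_mul_ofReal_div_ofReal (hℓ _), three_mul_div_mul_div_four_pow hh]
  have hIcc : ∀ n x, x ∈ J n → ∀ y ∈ Icc (a n) (a n + ℓ n), |x - y| ≤ ℓ n :=
    fun n x hx y hy => by
      simpa [Real.dist_eq] using Real.dist_le_of_mem_Icc (Ioo_subset_Icc_self hx) hy
  have hlim : Tendsto (fun n => w (n + 1)) atTop (𝓝 p) := by
    have hℓ0 : Tendsto ℓ atTop (𝓝 0) :=
      tendsto_const_nhds.div_atTop (tendsto_pow_atTop_atTop_of_one_lt (by norm_num))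
    exact tendsto_iff_norm_sub_tendsto_zero.2
      (squeeze_zero (fun _ => norm_nonneg _) (fun n => hIcc n _ (hw n).1 p (hp n)) hℓ0)
  refine ⟨w 1, hJ0 ▸ (hw 0).1, by simpa [ℓ] using hI 0, by simpa [hvol, ℓ] using (hw 0).2.2, ?_⟩
  exact abs_sub_le_of_tendsto_of_abs_sub_succ_le ((hF.tendsto p).comp hlim) fun n =>
    abs_sub_le_of_grrKernel_le_dyadic hc hh (by positivity)
      (hIcc n _ (hw n).1 _ (Ioo_subset_Icc_self (hnest n (hw (n + 1)).1))) (hstep n)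

theorem abs_sub_le_of_lintegral_grrKernel_le {c b s t : ℝ} {F : ℝ → ℝ} (hc : 0 < c)
    (hb : 0 ≤ b) (hst : s < t) (hF : Continuous F)
    (hB : ∫⁻ x in Ioo s t, ∫⁻ y in Ioo s t, grrKernel c F x y ≤ ENNReal.ofReal b) :
    |F t - F s| ≤ √(2 * c * (t - s)) * (18 + 5 * √(log (1 + b / (t - s) ^ 2))) := by
  set h := t - s
  have hh : 0 < h := sub_pos.2 hst
  have hℓ : ∀ n : ℕ, h / 4 ^ (n + 1) ≤ h / 4 ^ n := fun n => by
    gcongr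
    · norm_num
    · omega
  -- any base point does for the chain at `s`
  obtain ⟨u, hu, hIu, -, hus⟩ := exists_abs_sub_le_of_dyadic_chain hc hb hh hF hB
    (a := fun _ => s) (p := s) (by simp [h]) (fun n => Ioo_subset_Ioo_right (by linarith [hℓ n]))
    (fun n => ⟨le_rfl, by simp; positivity⟩) s
  obtain ⟨v, hv, -, hΦ, hvt⟩ := exists_abs_sub_le_of_dyadic_chain hc hb hh hF hB
    (a := fun n => t - h / 4 ^ n) (p := t) (by simp [h])
    (fun n => by simpa using Ioo_subset_Ioo_left (by linarith [hℓ n]))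
    (fun n => by simp; positivity) u
  have hΦuv : grrKernel c F u v ≤ ENNReal.ofReal (36 * 16 ^ 0 * (b / h ^ 2)) :=
    calc grrKernel c F u v ≤ 3 * ENNReal.ofReal (3 * b / h) / ENNReal.ofReal h :=
          hΦ.trans (by gcongr)
      _ = ENNReal.ofReal (9 * (b / h ^ 2)) := by
          rw [three_mul_ofReal_div_ofReal hh]
          congr 1
          field_simp
          ring
      _ ≤ ENNReal.ofReal (36 * 16 ^ 0 * (b / h ^ 2)) := by gcongr; norm_num
  have huv : |F u - F v| ≤ √(2 * c * h) * (√(log (1 + b / h ^ 2)) + 2) := by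
    have hdist : |u - v| ≤ h / 4 ^ 0 := by
      simp only [h, mem_Ioo] at hu hv ⊢
      rw [abs_le]
      constructor <;> linarith
    simpa using abs_sub_le_of_grrKernel_le_dyadic hc hh (by positivity) hdist hΦuv
  calc |F t - F s| ≤ |F t - F v| + (|F v - F u| + |F u - F s|) :=
        (abs_sub_le _ (F v) _).trans (by gcongr; exact abs_sub_le _ _ _)
    _ = |F v - F t| + |F u - F v| + |F u - F s| := by
        rw [abs_sub_comm (F t) (F v), abs_sub_comm (F v) (F u), add_assoc]
    _ ≤ √(2 * c * h) * (2 * √(log (1 + b / h ^ 2)) + 8) +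
          √(2 * c * h) * (√(log (1 + b / h ^ 2)) + 2) +
          √(2 * c * h) * (2 * √(log (1 + b / h ^ 2)) + 8) := by gcongr
    _ = √(2 * c * h) * (18 + 5 * √(log (1 + b / h ^ 2))) := by ring

theorem log_one_add_rpow_mul_div_sq_le {ε ξ t h : ℝ} (hε : 0 ≤ ε) (hξ : 0 ≤ ξ) (ht : 1 ≤ t)
    (hh : 0 < h) (hht : h ≤ t) :
    log (1 + t ^ (2 * (1 + ε)) * ξ / h ^ 2) ≤ log (1 + ξ) + 2 * (log (t / h) + ε * log t) := by
  have hA : 1 ≤ t ^ (2 * (1 + ε)) / h ^ 2 := by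
    rw [one_le_div (by positivity)]
    calc h ^ 2 ≤ t ^ (2 : ℝ) := by rw [rpow_two]; gcongr
      _ ≤ t ^ (2 * (1 + ε)) := rpow_le_rpow_of_exponent_le ht (by linarith)
  calc log (1 + t ^ (2 * (1 + ε)) * ξ / h ^ 2) = log (1 + t ^ (2 * (1 + ε)) / h ^ 2 * ξ) := by
        ring_nf
    _ ≤ log (t ^ (2 * (1 + ε)) / h ^ 2) + log (1 + ξ) := log_one_add_mul_le hA hξ
    _ = log (1 + ξ) + 2 * (log (t / h) + ε * log t) := by
        rw [log_div (by positivity) (by positivity), log_rpow (by linarith), log_pow,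
          log_div (by positivity) (by positivity)]
        push_cast
        ring

theorem eighteen_add_five_mul_sqrt_le {K L P : ℝ} (hL : 0 ≤ L) (hP : 0 ≤ P)
    (hK : K ≤ L + 2 * P) :
    18 + 5 * √K ≤ 8 * (√L + √2 * (1 + √π)) * √(1 + P) := by
  have hsK : √K ≤ √L + √2 * √P := by
    rw [sqrt_le_left (by positivity)]
    nlinarith [sq_sqrt hL, sq_sqrt hP, sq_sqrt zero_le_two,
      mul_nonneg (mul_nonneg (sqrt_nonneg L) (sqrt_nonneg 2)) (sqrt_nonneg P)]
  have hM : 1 ≤ √(1 + P) := one_le_sqrt.2 (by linarith)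
  have hPM : √P ≤ √(1 + P) := sqrt_le_sqrt (by linarith)
  have hπ : 9 / 4 ≤ √2 * √π := by
    rw [← sqrt_mul zero_le_two, le_sqrt (by norm_num) (by positivity)]
    nlinarith [pi_gt_three]
  have h₁ : √L ≤ √L * √(1 + P) := le_mul_of_one_le_right (sqrt_nonneg L) hM
  have h₂ : √2 * √P ≤ √2 * √(1 + P) := by gcongr
  have h₃ : √2 * √π ≤ √2 * √π * √(1 + P) := le_mul_of_one_le_right (by positivity) hM
  linarith [sqrt_nonneg L, mul_nonneg (sqrt_nonneg 2) (sqrt_nonneg P)]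

theorem sqrt_mul_eighteen_add_le {c ε ξ t h : ℝ} (hc : 0 ≤ c) (hε : 0 ≤ ε) (hξ : 0 ≤ ξ)
    (ht : 1 ≤ t) (hh : 0 < h) (hht : h ≤ t) :
    √(2 * c * h) * (18 + 5 * √(log (1 + t ^ (2 * (1 + ε)) * ξ / h ^ 2))) ≤
      8 * √(2 * c) * (√(log (4 * ξ + 1)) + √2 * (1 + √π)) *
        √(h * (1 + log (t / h) + ε * |log t|)) := by
  have hlogt : |log t| = log t := abs_of_nonneg (log_nonneg ht)
  have hK : log (1 + t ^ (2 * (1 + ε)) * ξ / h ^ 2) ≤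
      log (4 * ξ + 1) + 2 * (log (t / h) + ε * |log t|) := by
    rw [hlogt]
    have hξ' : log (1 + ξ) ≤ log (4 * ξ + 1) := log_le_log (by linarith) (by linarith)
    linarith [log_one_add_rpow_mul_div_sq_le hε hξ ht hh hht]
  have hbound := eighteen_add_five_mul_sqrt_le (log_nonneg (by linarith))
    (add_nonneg (log_nonneg ((one_le_div hh).2 hht)) (by positivity)) hK
  calc √(2 * c * h) * (18 + 5 * √(log (1 + t ^ (2 * (1 + ε)) * ξ / h ^ 2)))
      = √(2 * c) * √h * (18 + 5 * √(log (1 + t ^ (2 * (1 + ε)) * ξ / h ^ 2))) := by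
        rw [sqrt_mul (by positivity)]
    _ ≤ √(2 * c) * √h * (8 * (√(log (4 * ξ + 1)) + √2 * (1 + √π)) *
          √(1 + (log (t / h) + ε * |log t|))) := by gcongr
    _ = _ := by rw [← add_assoc, sqrt_mul hh.le]; ring

/-- **Key deterministic estimate in the proof of the main theorem.**
Let `c > 1`, `ε > 0`, `ξ ≥ 0`, `t ≥ 1` and let `f : [0,t] → ℝ` be continuous with
`∫₀ᵗ∫₀ᵗ (exp(|f(x) − f(y)|²/(2c|x − y|)) − 1) dx dy ≤ t^{2(1+ε)} ξ`.
Then for all `0 ≤ s ≤ t` with `h := t − s > 0`,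
`|f(t) − f(s)| ≤ 8√(2c) (√(ln(4ξ+1)) + √2(1+√π)) √(h (1 + ln(t/h) + ε|ln t|))`. -/
theorem deterministic_modulus_estimate
    (c ε ξ t : ℝ) (hc : 1 < c) (hε : 0 < ε) (hξ : 0 ≤ ξ) (ht : 1 ≤ t)
    (f : ℝ → ℝ) (hf : ContinuousOn f (Set.Icc 0 t))
    (hint : ∫⁻ x in Set.Icc (0:ℝ) t, ∫⁻ y in Set.Icc (0:ℝ) t,
        ENNReal.ofReal (Real.exp (|f x - f y| ^ 2 / (2 * c * |x - y|)) - 1) ≤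
      ENNReal.ofReal (t ^ (2 * (1 + ε)) * ξ)) :
    ∀ s : ℝ, 0 ≤ s → s < t →
      |f t - f s| ≤
        8 * Real.sqrt (2 * c) *
          (Real.sqrt (Real.log (4 * ξ + 1)) + Real.sqrt 2 * (1 + Real.sqrt Real.pi)) *
          Real.sqrt ((t - s) * (1 + Real.log (t / (t - s)) + ε * |Real.log t|)) := by
  intro s hs hst
  have ht0 : 0 ≤ t := zero_le_one.trans ht
  obtain ⟨F, hF, hFf⟩ : ∃ F : ℝ → ℝ, Continuous F ∧ EqOn F f (Icc 0 t) :=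
    ⟨IccExtend ht0 ((Icc 0 t).domRestrict f), hf.domRestrict.Icc_extend',
      fun x hx => IccExtend_of_mem ht0 _ hx⟩
  have hsub : Ioo s t ⊆ Icc 0 t := Ioo_subset_Icc_self.trans (Icc_subset_Icc_left hs)
  have hB : ∫⁻ x in Ioo s t, ∫⁻ y in Ioo s t, grrKernel c F x y ≤
      ENNReal.ofReal (t ^ (2 * (1 + ε)) * ξ) :=
    calc _ ≤ ∫⁻ x in Icc 0 t, ∫⁻ y in Icc 0 t, grrKernel c F x y :=
          (lintegral_mono fun x => lintegral_mono_set hsub).trans (lintegral_mono_set hsub)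
      _ = _ := setLIntegral_congr_fun measurableSet_Icc fun x hx =>
          setLIntegral_congr_fun measurableSet_Icc fun y hy => by
            simp only [grrKernel, hFf hx, hFf hy]
      _ ≤ _ := hint
  rw [← hFf (right_mem_Icc.2 ht0), ← hFf ⟨hs, hst.le⟩]
  refine (abs_sub_le_of_lintegral_grrKernel_le (by linarith) (by positivity) hst hF hB).trans ?_
  simpa only [mul_div_assoc] using
    sqrt_mul_eighteen_add_le (by linarith) hε.le hξ ht (sub_pos.2 hst) (by linarith)
end
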